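/- Let A be an associative Q(q)-algebra, B_i, B_j ∈ A, and Z a central element of A. With ı-divided powers of B_i defined with parameter Z (so B^{(3)}_{1̄} = B_i(B_i² − qZ)/[3]_q!, B^{(3)}_{0̄} = B_i(B_i² − [2]_q² qZ)/[3]_q!, B^{(2)}_{1̄} = (B_i² − qZ)/[2]_q, B^{(2)}_{0̄} = B_i²/[2]_q), the ıSerre relation ∑_{r=0}^{3} (−1)^r B^{(r)}_{i,0̄+p̄} B_j B^{(3−r)}_{i,p̄} = 0 for a_{ij} = −2 (for either parity p̄) is equivalent to the identity B_i³ B_j − [3]_q B_i² B_j B_i + [3]_q B_i B_j B_i² − B_j B_i³ = [2]_q² q Z (B_i B_j − B_j B_i). -/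

import Mathlib

noncomputable section

abbrev K : Type := RatFunc ℚ

/-- The indeterminate `q` in `ℚ(q)`. -/
def qq : K := RatFunc.X

/-- Balanced quantum integer at base `x`. -/
def qintx (x : K) (m : ℤ) : K := (x ^ m - x ^ (-m)) / (x - x⁻¹)

/-- Balanced quantum integer `[m]_q`. -/
def qint (m : ℤ) : K := qintx qq m

/-- Quantum factorial at base `x`. -/
def qfactx (x : K) (m : ℕ) : K := ∏ j ∈ Finset.range m, qintx x ((j : ℤ) + 1)

/-- Quantum factorial `[m]_q!`. -/
def qfact (m : ℕ) : K := qfactx qq m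

/-- Gaussian binomial coefficient at base `x` (zero when `r > m`). -/
def qbinomx (x : K) (m r : ℕ) : K :=
  if r ≤ m then qfactx x m / (qfactx x r * qfactx x (m - r)) else 0

/-- Gaussian binomial coefficient. -/
def qbinom (m r : ℕ) : K := qbinomx qq m r

/-- The ı-divided powers `B^{(m)}_{p̄}` of `B` with central parameter `Z`,
given by the closed product formulas of the paper. -/
def iDP {A : Type*} [Ring A] [Algebra K A] (B Z : A) (p : ZMod 2) (m : ℕ) : A :=
  (qfact m)⁻¹ •
    ((if m % 2 = 1 then B else 1) *
      ((List.range (m / 2)).map (fun j =>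
        B ^ 2 -
          ((qint (if p = 1 then 2 * (j : ℤ) + 1
                  else if m % 2 = 1 then 2 * (j : ℤ) + 2 else 2 * (j : ℤ))) ^ 2 * qq) • Z)).prod)

/-- The usual divided power `x^{(k)} = x^k/[k]_q!`. -/
def dp {A : Type*} [Ring A] [Algebra K A] (x : A) (k : ℕ) : A := (qfact k)⁻¹ • x ^ k

/-!
Since `B^{(0)} = 1` and `B^{(1)} = B_i`, the ıSerre sum only involves `B^{(2)} = (B_i² - a Z)/[2]`
and `B^{(3)} = B_i (B_i² - b Z)/[3]!`. Multiplying it by `-[3]!` and moving the central `Z`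
to the front gives `S - ([3] a + b) Z (B_i B_j - B_j B_i)`, where `S` is the left-hand side of the
identity. For both parities `[3] a + b = [2]² q`, because `[3] + 1 = [2]²`; so each ıSerre relation
is a nonzero multiple of the same identity.
-/

lemma qq_ne_zero : qq ≠ 0 := RatFunc.X_ne_zero

lemma qq_pow_ne_one {n : ℕ} (hn : n ≠ 0) : qq ^ n ≠ 1 := by
  have h : qq ^ n - 1 = algebraMap (Polynomial ℚ) K (Polynomial.X ^ n - Polynomial.C 1) := by
    simp [qq, RatFunc.algebraMap_X]
  rw [← sub_ne_zero, h]
  exact RatFunc.algebraMap_ne_zero (Polynomial.monic_X_pow_sub_C 1 hn).ne_zero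

lemma qq_zpow_ne_one {m : ℤ} (hm : m ≠ 0) : qq ^ m ≠ 1 := by
  obtain ⟨n, rfl | rfl⟩ := Int.eq_nat_or_neg m
  · exact_mod_cast qq_pow_ne_one (n := n) (by omega)
  · simpa using qq_pow_ne_one (n := n) (by omega)

lemma qq_zpow_sub_zpow_neg_ne_zero {m : ℤ} (hm : m ≠ 0) : qq ^ m - qq ^ (-m) ≠ 0 := by
  rw [sub_ne_zero]
  intro h
  apply qq_zpow_ne_one (mul_ne_zero two_ne_zero hm)
  rw [two_mul, zpow_add₀ qq_ne_zero]
  nth_rewrite 1 [h]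
  rw [← zpow_add₀ qq_ne_zero, neg_add_cancel, zpow_zero]

lemma qintx_natCast (x : K) (n : ℕ) :
    qintx x n = (x ^ n - (x ^ n)⁻¹) / (x - x⁻¹) := by
  simp [qintx]

lemma qq_sub_inv_ne_zero : qq - qq⁻¹ ≠ 0 := by
  simpa using qq_zpow_sub_zpow_neg_ne_zero one_ne_zero

lemma qint_ne_zero {m : ℤ} (hm : m ≠ 0) : qint m ≠ 0 :=
  div_ne_zero (qq_zpow_sub_zpow_neg_ne_zero hm) qq_sub_inv_ne_zero

lemma qintx_one {x : K} (hx : x - x⁻¹ ≠ 0) : qintx x 1 = 1 := by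
  simpa [qintx] using div_self hx

lemma qintx_three_add_one {x : K} (hx0 : x ≠ 0) (hx : x - x⁻¹ ≠ 0) :
    qintx x 3 + 1 = qintx x 2 ^ 2 := by
  rw [show (3 : ℤ) = (3 : ℕ) by rfl, show (2 : ℤ) = (2 : ℕ) by rfl, qintx_natCast, qintx_natCast,
    div_add_one hx, div_pow, div_eq_div_iff hx (pow_ne_zero 2 hx)]
  field_simp
  ring

lemma qint_zero : qint 0 = 0 := by simp [qint, qintx]

lemma qint_one : qint 1 = 1 := qintx_one qq_sub_inv_ne_zero

lemma qint_three_add_one : qint 3 + 1 = qint 2 ^ 2 :=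
  qintx_three_add_one qq_ne_zero qq_sub_inv_ne_zero

lemma qfact_one : qfact 1 = 1 := by
  simp [qfact, qfactx, qintx_one qq_sub_inv_ne_zero]

lemma qfact_two : qfact 2 = qint 2 := by
  simp [qfact, qfactx, Finset.prod_range_succ, qint, qintx_one qq_sub_inv_ne_zero]

lemma qfact_three : qfact 3 = qint 2 * qint 3 := by
  simp [qfact, qfactx, Finset.prod_range_succ, qint, qintx_one qq_sub_inv_ne_zero]

section iDP

variable {A : Type*} [Ring A] [Algebra K A] (B Z : A)

lemma iDP_zero (p : ZMod 2) : iDP B Z p 0 = 1 := by simp [iDP, qfact, qfactx]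

lemma iDP_one (p : ZMod 2) : iDP B Z p 1 = B := by simp [iDP, qfact_one]

/-- The two parities differ only in how the central correction `[3] a + b = [2]² q` is split
between `B^{(2)}` and `B^{(3)}`. -/
lemma iDP_two_three (p : ZMod 2) :
    ∃ a b : K, qint 3 * a + b = qint 2 ^ 2 * qq ∧
      iDP B Z p 2 = (qint 2)⁻¹ • (B ^ 2 - a • Z) ∧
      iDP B Z p 3 = (qfact 3)⁻¹ • (B * (B ^ 2 - b • Z)) := by
  obtain rfl | rfl : p = 0 ∨ p = 1 := by revert p; decide
  · refine ⟨0, qint 2 ^ 2 * qq, by ring, ?_, ?_⟩ <;> simp [iDP, qfact_two, qint_zero]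
  · refine ⟨qq, qq, by linear_combination qq * qint_three_add_one, ?_, ?_⟩ <;>
      simp [iDP, qfact_two, qint_one]

end iDP

lemma iserre_numerator_eq {R A : Type*} [CommRing R] [Ring A] [Algebra R A] (B C Z : A)
    (hZ : ∀ a : A, Z * a = a * Z) (t a b : R) :
    C * (B * (B ^ 2 - b • Z)) - t • (B * C * (B ^ 2 - a • Z))
      + t • ((B ^ 2 - a • Z) * C * B) - B * (B ^ 2 - b • Z) * C =
    -(B ^ 3 * C - t • (B ^ 2 * C * B) + t • (B * C * B ^ 2) - C * B ^ 3
      - (t * a + b) • (Z * (B * C - C * B))) := by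
  have hZ' : ∀ x y : A, x * (Z * y) = Z * (x * y) := fun x y => by
    rw [← mul_assoc, ← hZ, mul_assoc]
  simp only [mul_sub, sub_mul, smul_sub, mul_smul_comm, smul_mul_assoc, smul_smul, add_smul,
    pow_succ, pow_zero, one_mul, mul_assoc, ← hZ, hZ']
  abel

lemma iserre_sum_eq {A : Type*} [Ring A] [Algebra K A] (B C Z : A)
    (hZ : ∀ a : A, Z * a = a * Z) (p : ZMod 2) :
    ∑ r ∈ Finset.range 4, ((-1 : K) ^ r) • (iDP B Z p r * C * iDP B Z p (3 - r)) =
      -(qfact 3)⁻¹ • (B ^ 3 * C - qint 3 • (B ^ 2 * C * B) + qint 3 • (B * C * B ^ 2)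
        - C * B ^ 3 - (qint 2 ^ 2 * qq) • (Z * (B * C - C * B))) := by
  obtain ⟨a, b, hab, h2, h3⟩ := iDP_two_three B Z p
  rw [neg_smul, ← smul_neg, ← hab, ← iserre_numerator_eq B C Z hZ]
  simp only [Finset.sum_range_succ, Finset.sum_range_zero]
  norm_num [iDP_zero, iDP_one, h2, h3]
  have h2_inv : (qint 2)⁻¹ = (qfact 3)⁻¹ * qint 3 := by
    rw [qfact_three, mul_inv_rev, mul_right_comm, inv_mul_cancel₀ (qint_ne_zero three_ne_zero),
      one_mul]
  rw [h2_inv, mul_smul, mul_smul]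
  simp only [smul_sub, smul_add]
  abel

theorem stmt3 {A : Type*} [Ring A] [Algebra K A] (Bi Bj Z : A)
    (hZ : ∀ a : A, Z * a = a * Z) :
    (∀ p : ZMod 2, ∑ r ∈ Finset.range 4,
        ((-1 : K) ^ r) • (iDP Bi Z p r * Bj * iDP Bi Z p (3 - r)) = 0) ↔
    Bi ^ 3 * Bj - qint 3 • (Bi ^ 2 * Bj * Bi) + qint 3 • (Bi * Bj * Bi ^ 2) - Bj * Bi ^ 3 =
      ((qint 2) ^ 2 * qq) • (Z * (Bi * Bj - Bj * Bi)) := by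
  have hfact : qfact 3 ≠ 0 := by
    rw [qfact_three]
    exact mul_ne_zero (qint_ne_zero two_ne_zero) (qint_ne_zero three_ne_zero)
  simp only [iserre_sum_eq Bi Bj Z hZ, smul_eq_zero, neg_eq_zero, inv_eq_zero, hfact, false_or,
    sub_eq_zero, forall_const]
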